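/- arXiv:2212.14578 — 3 statements merged into one kernel-verified Lean document; each statement's English description precedes it below -/
import Mathlib

section
/- Let P be a probability distribution with support of size k < ∞ on a countable set, and let P̂ₙ be the empirical distribution from n ≥ 3 i.i.d. samples. Then the expected missing mass satisfies E[Σ_a 1{P̂ₙ(a)=0}·P(a)] ≤ k/n, and the weighted version satisfies E[Σ_a 1{P̂ₙ(a)=0}·P(a)·max{1, log(1/P(a))}] ≤ k·log(n)/n. -/
/-!
The event "`a` is missing from the sample" has probability `(1 - P a) ^ n`, so both expectations
are sums over the support of `(1 - x) ^ n` times `x`, resp. `x * max 1 (log (1 / x))`, at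
`x = P a`. Each term is at most `1 / n`, resp. `log n / n`: the first because
`(1 - x) ^ n * n x ≤ n x e^{-n x} ≤ 1`, the second by splitting `x = n⁻¹ * (n x)` in
`x log (1 / x)`, which bounds it by `x log n + (1 - n x) / n`.
-/

open Finset Real

theorem one_le_log_natCast {n : ℕ} (hn : 3 ≤ n) : 1 ≤ log n :=
  (le_log_iff_exp_le (by positivity)).mpr (exp_one_lt_three.le.trans (by exact_mod_cast hn))

theorem one_sub_pow_mul_le_one_div {x : ℝ} (hx0 : 0 ≤ x) (hx1 : x ≤ 1) {n : ℕ} (hn : n ≠ 0) :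
    (1 - x) ^ n * x ≤ 1 / n := by
  have hn0 : (0 : ℝ) < n := by positivity
  have hpow : (1 - x) ^ n ≤ exp (-(n * x)) := by
    calc (1 - x) ^ n ≤ exp (-x) ^ n := pow_le_pow_left₀ (by linarith) (one_sub_le_exp_neg x) n
      _ = exp (-(n * x)) := by rw [← exp_nat_mul]; ring_nf
  rw [le_div_iff₀ hn0]
  calc (1 - x) ^ n * x * n = (1 - x) ^ n * (n * x) := by ring
    _ ≤ exp (-(n * x)) * (n * x) := by gcongr
    _ ≤ exp (-1) := by rw [mul_comm]; exact mul_exp_neg_le_exp_neg_one _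
    _ ≤ 1 := exp_le_one_iff.mpr (by norm_num)

theorem negMulLog_le_mul_log_add {x : ℝ} (hx0 : 0 ≤ x) {n : ℕ} (hn : n ≠ 0) :
    negMulLog x ≤ x * log n + (1 - n * x) / n := by
  have hn0 : (0 : ℝ) < n := by positivity
  have hinv : negMulLog (n : ℝ)⁻¹ = log n / n := by
    rw [negMulLog, log_inv]; ring
  calc negMulLog x = negMulLog ((n : ℝ)⁻¹ * (n * x)) := by rw [inv_mul_cancel_left₀ hn0.ne']
    _ = n * x * negMulLog (n : ℝ)⁻¹ + (n : ℝ)⁻¹ * negMulLog (n * x) := negMulLog_mul _ _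
    _ ≤ n * x * (log n / n) + (n : ℝ)⁻¹ * (1 - n * x) := by
        rw [hinv]; gcongr; exact negMulLog_le_one_sub_self (by positivity)
    _ = x * log n + (1 - n * x) / n := by field_simp

theorem one_sub_pow_mul_negMulLog_le {x : ℝ} (hx0 : 0 ≤ x) (hx1 : x ≤ 1) {n : ℕ} (hn : 3 ≤ n) :
    (1 - x) ^ n * negMulLog x ≤ log n / n := by
  have hy0 : 0 ≤ (1 - x) ^ n := pow_nonneg (by linarith) n
  have hy1 : (1 - x) ^ n ≤ 1 := pow_le_one₀ (by linarith) (by linarith)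
  have hyx : (1 - x) ^ n * x ≤ 1 / n := one_sub_pow_mul_le_one_div hx0 hx1 (by omega)
  have hlog := one_le_log_natCast hn
  calc (1 - x) ^ n * negMulLog x ≤ (1 - x) ^ n * (x * log n + (1 - n * x) / n) := by
        gcongr; exact negMulLog_le_mul_log_add hx0 (by omega)
    _ = (1 - x) ^ n * x * (log n - 1) + (1 - x) ^ n / n := by field_simp; ring
    _ ≤ 1 / n * (log n - 1) + 1 / n := by gcongr
    _ = log n / n := by ring

theorem one_sub_pow_mul_mul_max_one_log_le {x : ℝ} (hx0 : 0 ≤ x) (hx1 : x ≤ 1) {n : ℕ}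
    (hn : 3 ≤ n) : (1 - x) ^ n * (x * max 1 (log (1 / x))) ≤ log n / n := by
  rw [mul_max_of_nonneg _ _ hx0, mul_max_of_nonneg _ _ (pow_nonneg (by linarith) n), mul_one,
    one_div, log_inv, mul_neg, ← neg_mul, ← negMulLog]
  refine max_le ?_ (one_sub_pow_mul_negMulLog_le hx0 hx1 hn)
  calc (1 - x) ^ n * x ≤ 1 / n := one_sub_pow_mul_le_one_div hx0 hx1 (by omega)
    _ ≤ log n / n := by gcongr; exact one_le_log_natCast hn

section MissingMass

variable {α : Type*} [DecidableEq α] {n : ℕ}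

theorem prod_mul_ite_card_filter_eq_zero (P c : α → ℝ) (ω : Fin n → α) (a : α) :
    (∏ i, P (ω i)) * (if (univ.filter fun i => ω i = a).card = 0 then c a else 0) =
      (∏ i, Function.update P a 0 (ω i)) * c a := by
  by_cases hhit : ∃ i, ω i = a
  · obtain ⟨i, hi⟩ := hhit
    have : (univ.filter fun i => ω i = a).card ≠ 0 := by simpa using ⟨i, hi⟩
    rw [if_neg this, mul_zero, prod_eq_zero (mem_univ i) (by simp [hi]), zero_mul]
  · have : (univ.filter fun i => ω i = a).card = 0 := by simpa using hhit
    rw [if_pos this]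
    congr 1
    exact prod_congr rfl fun i _ => (Function.update_of_ne (fun h => hhit ⟨i, h⟩) _ _).symm

theorem tsum_prod_mul_tsum_ite_card_filter_eq_zero (P c : α → ℝ) (s : Finset α)
    (hP : ∀ a ∉ s, P a = 0) (hc : ∀ a ∉ s, c a = 0) :
    ∑' ω : Fin n → α, (∏ i, P (ω i)) *
        ∑' a, (if (univ.filter fun i => ω i = a).card = 0 then c a else 0) =
      ∑ a ∈ s, (∑ b ∈ s, P b - P a) ^ n * c a := by
  have hinner : ∀ ω : Fin n → α,
      ∑' a, (if (univ.filter fun i => ω i = a).card = 0 then c a else 0) =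
        ∑ a ∈ s, if (univ.filter fun i => ω i = a).card = 0 then c a else 0 :=
    fun ω => tsum_eq_sum fun a ha => by simp [hc a ha]
  have hvanish : ∀ ω ∉ Fintype.piFinset fun _ : Fin n => s, ∀ a,
      ∏ i, Function.update P a 0 (ω i) = 0 := by
    intro ω hω a
    obtain ⟨i, hi⟩ := not_forall.mp (Fintype.mem_piFinset.not.mp hω)
    exact prod_eq_zero (mem_univ i) (by simp [Function.update_apply, hP _ hi])
  calc _ = ∑' ω : Fin n → α, ∑ a ∈ s, (∏ i, Function.update P a 0 (ω i)) * c a := by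
        simp_rw [hinner, mul_sum, prod_mul_ite_card_filter_eq_zero]
    _ = ∑ ω ∈ Fintype.piFinset fun _ : Fin n => s, ∑ a ∈ s,
          (∏ i, Function.update P a 0 (ω i)) * c a :=
        tsum_eq_sum fun ω hω => sum_eq_zero fun a _ => by rw [hvanish ω hω a, zero_mul]
    _ = ∑ a ∈ s, (∑ b ∈ s, P b - P a) ^ n * c a := by
        rw [sum_comm]
        refine sum_congr rfl fun a ha => ?_
        rw [← sum_mul, sum_prod_piFinset, prod_const, card_univ, Fintype.card_fin,
          sum_update_of_mem ha, sdiff_singleton_eq_erase, sum_erase_eq_sub ha, zero_add]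

end MissingMass

theorem expected_missing_mass_bound_general {α : Type*} [DecidableEq α]
    (P : α → ℝ) (hP0 : ∀ a, 0 ≤ P a) (hP1 : ∑' a, P a = 1)
    (s : Finset α) (hs : {a | P a ≠ 0} = ↑s)
    (n : ℕ) (hn : 3 ≤ n) :
    (∑' ω : Fin n → α, (∏ i, P (ω i)) *
        ∑' a, (if (Finset.univ.filter fun i => ω i = a).card = 0 then P a else 0))
      ≤ s.card / n ∧
    (∑' ω : Fin n → α, (∏ i, P (ω i)) *
        ∑' a, (if (Finset.univ.filter fun i => ω i = a).card = 0
          then P a * max 1 (Real.log (1 / P a)) else 0))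
      ≤ s.card * Real.log n / n := by
  have hvanish : ∀ a ∉ s, P a = 0 := fun a ha =>
    not_not.mp fun h => ha (by rw [← mem_coe, ← hs]; exact h)
  have hsum : ∑ a ∈ s, P a = 1 := hP1 ▸ (tsum_eq_sum hvanish).symm
  have hle1 : ∀ a ∈ s, P a ≤ 1 := fun a ha => hsum ▸ single_le_sum (fun b _ => hP0 b) ha
  constructor
  · rw [tsum_prod_mul_tsum_ite_card_filter_eq_zero P P s hvanish hvanish, hsum, ← mul_one_div,
      ← nsmul_eq_mul]
    exact sum_le_card_nsmul s _ _ fun a ha =>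
      one_sub_pow_mul_le_one_div (hP0 a) (hle1 a ha) (by omega)
  · rw [tsum_prod_mul_tsum_ite_card_filter_eq_zero P _ s hvanish
      fun a ha => by rw [hvanish a ha, zero_mul], hsum, mul_div_assoc, ← nsmul_eq_mul]
    exact sum_le_card_nsmul s _ _ fun a ha =>
      one_sub_pow_mul_mul_max_one_log_le (hP0 a) (hle1 a ha) hn

/-- Expected missing mass bounds: for `P` with support of size `k` and `n ≥ 3`
i.i.d. samples, `E[Σ_a 1{P̂ₙ(a)=0} P(a)] ≤ k/n` and
`E[Σ_a 1{P̂ₙ(a)=0} P(a) max{1, log(1/P(a))}] ≤ k log n / n`.  The expectation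
is written out explicitly over all sample sequences with i.i.d. product
weights. -/
theorem expected_missing_mass_bound {α : Type*} [Countable α] [DecidableEq α]
    (P : α → ℝ) (hP0 : ∀ a, 0 ≤ P a) (hP1 : ∑' a, P a = 1)
    (s : Finset α) (hs : {a | P a ≠ 0} = ↑s)
    (n : ℕ) (hn : 3 ≤ n) :
    (∑' ω : Fin n → α, (∏ i, P (ω i)) *
        ∑' a, (if (Finset.univ.filter fun i => ω i = a).card = 0 then P a else 0))
      ≤ s.card / n ∧
    (∑' ω : Fin n → α, (∏ i, P (ω i)) *
        ∑' a, (if (Finset.univ.filter fun i => ω i = a).card = 0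
          then P a * max 1 (Real.log (1 / P a)) else 0))
      ≤ s.card * Real.log n / n :=
  expected_missing_mass_bound_general P hP0 hP1 s hs n hn
end

section
/- For all x ∈ (0,1) and all integers n ≥ 3, we have 0 ≤ (1−x)ⁿ · x · log(1/x) ≤ log(n)/n. -/
/-!
Write `(1 - x)ⁿ x log (1/x) = (1 - x)ⁿ · negMulLog x` and split at `x = 1/n`. Below it, drop
`(1 - x)ⁿ ≤ 1`; then `n · negMulLog x = negMulLog (n x) + n x log n ≤ 1 - n x + n x log n ≤ log n`,
using `log n ≥ 1`. Above it, `log (1/x) ≤ log n`, while `(1 - x)ⁿ ≤ e^{-n x}` and `t e^{-t} ≤ 1` give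
`(1 - x)ⁿ x ≤ 1/n`.
-/

open Real

lemma mul_negMulLog_le_log {c x : ℝ} (hc : exp 1 ≤ c) (hx : 0 ≤ x) (hcx : c * x ≤ 1) :
    c * negMulLog x ≤ log c := by
  have hc0 : 0 < c := (exp_pos 1).trans_le hc
  have hlogc : 1 ≤ log c := by simpa using log_le_log (exp_pos 1) hc
  have hsplit : c * negMulLog x = negMulLog (c * x) + c * x * log c := by
    rw [negMulLog_mul]; simp only [negMulLog]; ring
  have hcx0 : 0 ≤ c * x := mul_nonneg hc0.le hx
  calc c * negMulLog x = negMulLog (c * x) + c * x * log c := hsplit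
    _ ≤ 1 - c * x + c * x * log c := by gcongr; exact negMulLog_le_one_sub_self hcx0
    _ ≤ log c := by nlinarith

lemma natCast_mul_one_sub_pow_mul_le_one {x : ℝ} (hx0 : 0 ≤ x) (hx1 : x ≤ 1) (n : ℕ) :
    n * ((1 - x) ^ n * x) ≤ 1 :=
  calc n * ((1 - x) ^ n * x) ≤ n * (exp (-x) ^ n * x) := by
        gcongr
        exact one_sub_le_exp_neg x
    _ = (n * x) * exp (-(n * x)) := by rw [← exp_nat_mul]; ring_nf
    _ ≤ exp (-1) := mul_exp_neg_le_exp_neg_one _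
    _ ≤ 1 := by simp

/-- For all `x ∈ (0,1)` and integers `n ≥ 3`,
`0 ≤ (1−x)ⁿ x log(1/x) ≤ log(n)/n`. -/
theorem missing_mass_log_ineq :
    ∀ x ∈ Set.Ioo (0 : ℝ) 1, ∀ n : ℕ, 3 ≤ n →
      0 ≤ (1 - x) ^ n * x * Real.log (1 / x) ∧
      (1 - x) ^ n * x * Real.log (1 / x) ≤ Real.log n / n := by
  rintro x ⟨hx0, hx1⟩ n hn
  have hn_ge_e : exp 1 ≤ n := exp_one_lt_three.le.trans (by exact_mod_cast hn)
  have hn0 : (0 : ℝ) < n := (exp_pos 1).trans_le hn_ge_e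
  have hpow0 : 0 ≤ (1 - x) ^ n := pow_nonneg (by linarith) n
  have hnegMulLog : (1 - x) ^ n * x * log (1 / x) = (1 - x) ^ n * negMulLog x := by
    simp only [negMulLog, one_div, log_inv]; ring
  refine ⟨hnegMulLog ▸ mul_nonneg hpow0 (negMulLog_nonneg hx0.le hx1.le), ?_⟩
  rcases le_total (n * x) 1 with hsmall | hlarge
  · rw [hnegMulLog, le_div_iff₀ hn0]
    calc (1 - x) ^ n * negMulLog x * n ≤ 1 * negMulLog x * n := by
          gcongr
          · exact negMulLog_nonneg hx0.le hx1.le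
          · exact pow_le_one₀ (by linarith) (by linarith)
      _ ≤ log n := by linarith [mul_negMulLog_le_log hn_ge_e hx0.le hsmall]
  · have hlog : log (1 / x) ≤ log n :=
      log_le_log (by positivity) (by rw [div_le_iff₀ hx0]; linarith)
    have hmass : (1 - x) ^ n * x ≤ 1 / n := by
      rw [le_div_iff₀ hn0, mul_comm]
      exact natCast_mul_one_sub_pow_mul_le_one hx0.le hx1.le n
    calc (1 - x) ^ n * x * log (1 / x) ≤ 1 / n * log n :=
          mul_le_mul hmass hlog (log_nonneg (by rw [le_div_iff₀ hx0]; linarith)) (by positivity)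
      _ = log n / n := by ring
end

section
/- Suppose f:(0,∞)→[0,∞) is convex with f(1)=0, f(0) < ∞, f*(0) < ∞, and |f'(t)| ≤ C₁ max{1, log(1/t)} for t ∈ (0,1). Then lim_{t→∞} f'(t) = f*(0) and lim_{t→∞} (f*)'(t) = f(0), where f*(t) = t f(1/t). -/
/-!
Since `f t / t = (1 / t) * f (1 / (1 / t))`, the hypothesis on `f*` says `f t / t → f*(0)` as
`t → ∞`. By convexity `f'(t)` lies between the secant slopes of `f` over `[t/2, t]` and
`[t, 2t]`, and these are `2 (f(2s) / 2s) - f(s) / s` for `s = t/2, t`, so both tend to `f*(0)`.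
For the second limit, `(f*)'(t) = f(1/t) - (1/t) f'(1/t)`: the first term tends to `f(0)`, and
`s f'(s) → 0` as `s → 0⁺` because the derivative bound gives `|s f'(s)| ≤ C₁ (s - s log s)`.
-/

open Filter Set Real Topology

lemma tendsto_div_atTop_of_tendsto_mul_one_div {f : ℝ → ℝ} {L : ℝ}
    (hf : Tendsto (fun t => t * f (1 / t)) (𝓝[>] 0) (𝓝 L)) :
    Tendsto (fun t => f t / t) atTop (𝓝 L) := by
  convert hf.comp tendsto_inv_atTop_nhdsGT_zero using 2 with t
  simp [div_eq_inv_mul]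

lemma slope_two_mul {f : ℝ → ℝ} {t : ℝ} (ht : t ≠ 0) :
    slope f t (2 * t) = 2 * (f (2 * t) / (2 * t)) - f t / t := by
  rw [slope_def_field]
  field_simp
  ring

lemma ConvexOn.tendsto_deriv_atTop_of_tendsto_div {f : ℝ → ℝ} {L : ℝ}
    (hconv : ConvexOn ℝ (Ioi 0) f) (hdiff : ∀ t ∈ Ioi (0 : ℝ), DifferentiableAt ℝ f t)
    (hf : Tendsto (fun t => f t / t) atTop (𝓝 L)) :
    Tendsto (deriv f) atTop (𝓝 L) := by
  have hslope : Tendsto (fun t => slope f t (2 * t)) atTop (𝓝 L) := by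
    have hf2 := hf.comp (tendsto_id.const_mul_atTop two_pos)
    have hdiffquot := (hf2.const_mul 2).sub hf
    rw [two_mul, add_sub_cancel_right] at hdiffquot
    refine hdiffquot.congr' ?_
    filter_upwards [eventually_gt_atTop 0] with t ht
    exact (slope_two_mul ht.ne').symm
  refine tendsto_of_tendsto_of_tendsto_of_le_of_le' (hslope.comp
    (tendsto_id.atTop_div_const two_pos)) hslope ?_ ?_
  all_goals filter_upwards [eventually_gt_atTop 0] with t ht
  · have hle := hconv.slope_le_deriv (half_pos ht : t / 2 ∈ Ioi 0) ht (half_lt_self ht)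
      (hdiff t ht)
    simpa [Function.comp_def, mul_div_cancel₀] using hle
  · exact hconv.deriv_le_slope ht (mul_pos two_pos ht : 2 * t ∈ Ioi 0) (by linarith) (hdiff t ht)

lemma tendsto_mul_nhdsGT_zero_of_abs_le_mul_max_log {g : ℝ → ℝ} {C : ℝ}
    (hg : ∀ s ∈ Ioo (0 : ℝ) 1, |g s| ≤ C * max 1 (log (1 / s))) :
    Tendsto (fun s => s * g s) (𝓝[>] 0) (𝓝 0) := by
  have hmajorant : Tendsto (fun s => C * (s + negMulLog s)) (𝓝[>] 0) (𝓝 0) := by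
    have : Continuous fun s => C * (s + negMulLog s) := by fun_prop
    simpa using (this.tendsto 0).mono_left nhdsWithin_le_nhds
  refine squeeze_zero_norm' ?_ hmajorant
  filter_upwards [Ioo_mem_nhdsGT one_pos] with s hs
  have hlog : 0 ≤ log (1 / s) := log_nonneg (by rw [le_div_iff₀ hs.1]; linarith [hs.2])
  have hC : 0 ≤ C := nonneg_of_mul_nonneg_left ((abs_nonneg _).trans (hg s hs))
    (one_pos.trans_le (le_max_left _ _))
  calc ‖s * g s‖ = s * |g s| := by rw [norm_mul, norm_of_nonneg hs.1.le, norm_eq_abs]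
    _ ≤ s * (C * max 1 (log (1 / s))) := mul_le_mul_of_nonneg_left (hg s hs) hs.1.le
    _ ≤ s * (C * (1 + log (1 / s))) :=
      mul_le_mul_of_nonneg_left (mul_le_mul_of_nonneg_left
        (max_le_add_of_nonneg zero_le_one hlog) hC) hs.1.le
    _ = C * (s + negMulLog s) := by rw [negMulLog, one_div, log_inv]; ring

lemma hasDerivAt_mul_comp_one_div {f : ℝ → ℝ} {f' t : ℝ} (ht : t ≠ 0)
    (hf : HasDerivAt f f' (1 / t)) :
    HasDerivAt (fun x => x * f (1 / x)) (f (1 / t) - 1 / t * f') t := by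
  have hinv : HasDerivAt (fun x : ℝ => 1 / x) (-(1 / t ^ 2)) t := by
    simpa [one_div] using hasDerivAt_inv ht
  refine ((hasDerivAt_id' t).mul (hf.comp t hinv)).congr_deriv ?_
  simp only [Function.comp_apply]
  field_simp
  ring

theorem deriv_limits_at_top_general (f : ℝ → ℝ) (C1 f0 fstar0 : ℝ)
    (hconv : ConvexOn ℝ (Set.Ioi 0) f)
    (hdiff : ∀ t ∈ Set.Ioi (0 : ℝ), DifferentiableAt ℝ f t)
    (hf0 : Filter.Tendsto f (nhdsWithin 0 (Set.Ioi 0)) (nhds f0))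
    (hfstar0 : Filter.Tendsto (fun t => t * f (1 / t))
        (nhdsWithin 0 (Set.Ioi 0)) (nhds fstar0))
    (hC1 : ∀ t ∈ Set.Ioo (0 : ℝ) 1, |deriv f t| ≤ C1 * max 1 (Real.log (1 / t))) :
    Filter.Tendsto (deriv f) Filter.atTop (nhds fstar0) ∧
    Filter.Tendsto (deriv fun t => t * f (1 / t)) Filter.atTop (nhds f0) := by
  refine ⟨hconv.tendsto_deriv_atTop_of_tendsto_div hdiff
    (tendsto_div_atTop_of_tendsto_mul_one_div hfstar0), ?_⟩
  have h_inv : Tendsto (fun t : ℝ => 1 / t) atTop (𝓝[>] 0) := by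
    simpa only [one_div] using tendsto_inv_atTop_nhdsGT_zero
  have hlim := (hf0.comp h_inv).sub
    ((tendsto_mul_nhdsGT_zero_of_abs_le_mul_max_log hC1).comp h_inv)
  rw [sub_zero] at hlim
  refine hlim.congr' ?_
  filter_upwards [eventually_gt_atTop 0] with t ht
  exact ((hasDerivAt_mul_comp_one_div ht.ne' (hdiff _ (one_div_pos.2 ht)).hasDerivAt).deriv).symm

/-- If `f` is convex with `f(1)=0`, `f(0) < ∞`, `f*(0) < ∞`, and the derivative
bound `|f'(t)| ≤ C₁ max{1, log(1/t)}` holds on `(0,1)`, then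
`f'(t) → f*(0)` and `(f*)'(t) → f(0)` as `t → ∞`, where `f*(t) = t f(1/t)`. -/
theorem deriv_limits_at_top (f : ℝ → ℝ) (C1 f0 fstar0 : ℝ)
    (hconv : ConvexOn ℝ (Set.Ioi 0) f)
    (hnonneg : ∀ t ∈ Set.Ioi (0 : ℝ), 0 ≤ f t) (hf1 : f 1 = 0)
    (hdiff : ∀ t ∈ Set.Ioi (0 : ℝ), DifferentiableAt ℝ f t)
    (hcont : ContinuousOn (deriv f) (Set.Ioi 0))
    (hf0 : Filter.Tendsto f (nhdsWithin 0 (Set.Ioi 0)) (nhds f0))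
    (hfstar0 : Filter.Tendsto (fun t => t * f (1 / t))
        (nhdsWithin 0 (Set.Ioi 0)) (nhds fstar0))
    (hC1 : ∀ t ∈ Set.Ioo (0 : ℝ) 1, |deriv f t| ≤ C1 * max 1 (Real.log (1 / t))) :
    Filter.Tendsto (deriv f) Filter.atTop (nhds fstar0) ∧
    Filter.Tendsto (deriv fun t => t * f (1 / t)) Filter.atTop (nhds f0) :=
  deriv_limits_at_top_general f C1 f0 fstar0 hconv hdiff hf0 hfstar0 hC1
end
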